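/- arXiv:cs/0504082 — 6 statements merged into one kernel-verified Lean document; each statement's English description precedes it below -/
import Mathlib

section
/- Let T be a maximal interesting set in a finite simple graph G and let a, b be two non-adjacent vertices of C(T). Let C'(T) be the set of vertices of G/ab outside T that are adjacent to every vertex of T. If C'(T) is not a clique of G/ab, then T is a maximal interesting set in G/ab. -/
open SimpleGraph

/-- The graph `G/ab` obtained from `G` by contracting the two (non-adjacent) vertices
`a` and `b` : vertex `b` is removed and `a` plays the role of the new contracted vertex,
adjacent to every vertex that was adjacent to `a` or to `b`. -/
def contract {V : Type} (G : SimpleGraph V) (a b : V) : SimpleGraph {z : V // z ≠ b} where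
  Adj u v := u ≠ v ∧ (G.Adj u.1 v.1 ∨ (u.1 = a ∧ G.Adj b v.1) ∨ (v.1 = a ∧ G.Adj u.1 b))
  symm := by
    constructor
    rintro u v ⟨h1, h2⟩
    refine ⟨h1.symm, ?_⟩
    rcases h2 with h | ⟨h, h'⟩ | ⟨h, h'⟩
    · exact Or.inl h.symm
    · exact Or.inr (Or.inr ⟨h, h'.symm⟩)
    · exact Or.inr (Or.inl ⟨h, h'.symm⟩)
  loopless := by constructor; rintro u ⟨h1, -⟩; exact h1 rfl

/-- A walk is chordless if it is a (simple) path and the only edges of `G` between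
vertices of the walk are the edges of the walk, i.e. it is an induced path. -/
def IsChordless {V : Type} (G : SimpleGraph V) {x y : V} (p : G.Walk x y) : Prop :=
  p.IsPath ∧ ∀ u v, u ∈ p.support → v ∈ p.support → G.Adj u v → p.toSubgraph.Adj u v

/-- `{x, y}` is an even pair: `x ≠ y`, non-adjacent, and every chordless path from
`x` to `y` has even length. -/
def IsEvenPair {V : Type} (G : SimpleGraph V) (x y : V) : Prop :=
  x ≠ y ∧ ¬ G.Adj x y ∧ ∀ p : G.Walk x y, IsChordless G p → Even p.length

/-- A hole: a chordless cycle with at least four vertices (the only edges of `G`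
between vertices of the cycle are the cycle edges). -/
def IsHole {V : Type} (G : SimpleGraph V) {v : V} (p : G.Walk v v) : Prop :=
  p.IsCycle ∧ 4 ≤ p.length ∧
    ∀ u w, u ∈ p.support → w ∈ p.support → G.Adj u w → p.toSubgraph.Adj u w

/-- The set `S` induces a prism in `G`: two vertex-disjoint triangles
`a₁a₂a₃` and `b₁b₂b₃` joined by three vertex-disjoint paths `Pᵢ` from `aᵢ` to `bᵢ`,
with no other edges than those of the triangles and of the paths. -/
def IsPrismOn {V : Type} (G : SimpleGraph V) (S : Set V) : Prop :=
  ∃ (a₁ a₂ a₃ b₁ b₂ b₃ : V) (P₁ : G.Walk a₁ b₁) (P₂ : G.Walk a₂ b₂) (P₃ : G.Walk a₃ b₃),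
    P₁.IsPath ∧ P₂.IsPath ∧ P₃.IsPath ∧
    a₁ ≠ b₁ ∧ a₂ ≠ b₂ ∧ a₃ ≠ b₃ ∧
    (∀ u ∈ P₁.support, ∀ v ∈ P₂.support, u ≠ v) ∧
    (∀ u ∈ P₁.support, ∀ v ∈ P₃.support, u ≠ v) ∧
    (∀ u ∈ P₂.support, ∀ v ∈ P₃.support, u ≠ v) ∧
    S = {v | v ∈ P₁.support ∨ v ∈ P₂.support ∨ v ∈ P₃.support} ∧
    ∀ u ∈ S, ∀ v ∈ S, (G.Adj u v ↔
      (P₁.toSubgraph.Adj u v ∨ P₂.toSubgraph.Adj u v ∨ P₃.toSubgraph.Adj u v ∨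
        s(u, v) ∈ ({s(a₁, a₂), s(a₁, a₃), s(a₂, a₃),
                    s(b₁, b₂), s(b₁, b₃), s(b₂, b₃)} : Set (Sym2 V))))

/-- The class 𝒜 ("Artemis graphs"): no odd hole, no antihole of length at least 5,
and no prism, all as induced subgraphs. -/
def InArtemis {V : Type} (G : SimpleGraph V) : Prop :=
  (∀ (v : V) (p : G.Walk v v), IsHole G p → ¬ Odd p.length) ∧
  (∀ (v : V) (p : Gᶜ.Walk v v), IsHole Gᶜ p → ¬ 5 ≤ p.length) ∧
  ¬ ∃ S : Set V, IsPrismOn G S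

/-- A special even pair: an even pair whose contraction yields a graph with no prism. -/
def IsSpecialEvenPair {V : Type} (G : SimpleGraph V) (a b : V) : Prop :=
  IsEvenPair G a b ∧ ¬ ∃ S, IsPrismOn (contract G a b) S

/-- `C(T)`: the set of vertices outside `T` adjacent to every vertex of `T`. -/
def Cset {V : Type} (G : SimpleGraph V) (T : Set V) : Set V :=
  {v | v ∉ T ∧ ∀ t ∈ T, G.Adj v t}

/-- `N(X)`: the set of vertices outside `X` adjacent to at least one vertex of `X`. -/
def Nset {V : Type} (G : SimpleGraph V) (X : Set V) : Set V :=
  {v | v ∉ X ∧ ∃ x ∈ X, G.Adj v x}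

/-- `T` is interesting: `T` is non-empty, induces a connected subgraph of the
complement of `G`, and `C(T)` is not a clique of `G`. -/
def IsInteresting {V : Type} (G : SimpleGraph V) (T : Set V) : Prop :=
  T.Nonempty ∧ (Gᶜ.induce T).Connected ∧ ¬ G.IsClique (Cset G T)

/-- A maximal interesting set: interesting and not strictly contained in another
interesting set. -/
def IsMaximalInteresting {V : Type} (G : SimpleGraph V) (T : Set V) : Prop :=
  IsInteresting G T ∧ ∀ T', IsInteresting G T' → T ⊆ T' → T' = T

/-- A `T`-outer path: a chordless path whose two endvertices are in `C(T)` and whose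
interior vertices all lie outside `T ∪ C(T)`. -/
def IsOuterPath {V : Type} (G : SimpleGraph V) (T : Set V) {x y : V} (p : G.Walk x y) : Prop :=
  x ≠ y ∧ IsChordless G p ∧ x ∈ Cset G T ∧ y ∈ Cset G T ∧
  ∀ v ∈ p.support, v ≠ x → v ≠ y → v ∉ T ∪ Cset G T

/-- The set of interior vertices of a walk from `x` to `y`. -/
def walkInterior {V : Type} {G : SimpleGraph V} {x y : V} (p : G.Walk x y) : Set V :=
  {v | v ∈ p.support ∧ v ≠ x ∧ v ≠ y}

/-- A minimal `T`-outer path: no `T`-outer path has its interior strictly contained in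
the interior of `p`. -/
def IsMinimalOuterPath {V : Type} (G : SimpleGraph V) (T : Set V) {x y : V}
    (p : G.Walk x y) : Prop :=
  IsOuterPath G T p ∧
  ¬ ∃ (x' y' : V) (q : G.Walk x' y'), IsOuterPath G T q ∧ walkInterior q ⊂ walkInterior p

/-- For a minimal `T`-outer path `p = α z₁ ⋯ z_q β` (so `zᵢ = p.getVert i` for
`1 ≤ i ≤ p.length - 1`), the set `A` of vertices of `C(T)` adjacent to `z₁` and to none
of `z₂, …, z_q`. -/
def setA {V : Type} (G : SimpleGraph V) (T : Set V) {x y : V} (p : G.Walk x y) : Set V :=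
  {v | v ∈ Cset G T ∧ G.Adj v (p.getVert 1) ∧
    ∀ i, 2 ≤ i → i ≤ p.length - 1 → ¬ G.Adj v (p.getVert i)}

/-- The set `B` of vertices of `C(T)` adjacent to `z_q` and to none of `z₁, …, z_{q-1}`. -/
def setB {V : Type} (G : SimpleGraph V) (T : Set V) {x y : V} (p : G.Walk x y) : Set V :=
  {v | v ∈ Cset G T ∧ G.Adj v (p.getVert (p.length - 1)) ∧
    ∀ i, 1 ≤ i → i ≤ p.length - 2 → ¬ G.Adj v (p.getVert i)}

/-- `u <_A u'` : both in `A` and there is an odd chordless path from `u` to a vertex of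
`B` whose second vertex is `u'`. -/
def ltA {V : Type} (G : SimpleGraph V) (T : Set V) {x y : V} (p : G.Walk x y)
    (u u' : V) : Prop :=
  u ∈ setA G T p ∧ u' ∈ setA G T p ∧
  ∃ b ∈ setB G T p, ∃ q : G.Walk u b, IsChordless G q ∧ Odd q.length ∧ q.getVert 1 = u'

/-- `v <_B v'` : both in `B` and there is an odd chordless path from `v` to a vertex of
`A` whose second vertex is `v'`. -/
def ltB {V : Type} (G : SimpleGraph V) (T : Set V) {x y : V} (p : G.Walk x y)
    (v v' : V) : Prop :=
  v ∈ setB G T p ∧ v' ∈ setB G T p ∧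
  ∃ a ∈ setA G T p, ∃ q : G.Walk v a, IsChordless G q ∧ Odd q.length ∧ q.getVert 1 = v'

/-- `J` is a co-handle of `H`: `J` is a connected component of `G ∖ N(H)`, distinct
from `H`, with `N(J) = N(H)`. -/
def IsCohandleOf {V : Type} (G : SimpleGraph V) (J H : Set V) : Prop :=
  (∃ c : (G.induce (Nset G H)ᶜ).ConnectedComponent, Subtype.val '' c.supp = J) ∧
  J ≠ H ∧ Nset G J = Nset G H

/-- `H` is a handle of `G`. -/
def IsHandle {V : Type} (G : SimpleGraph V) (H : Set V) : Prop :=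
  2 ≤ H.ncard ∧ (G.induce H).Connected ∧ (∃ J, IsCohandleOf G J H) ∧
  ∀ v ∈ Nset G H, ∀ x y, x ∈ H → y ∈ H → G.Adj x y → (G.Adj v x ∨ G.Adj v y)

/-- `H` is a generalized handle of `G`: `H` contains at least one edge (but need not be
connected), some component `J ≠ H` of `G ∖ N(H)` satisfies `N(J) = N(H)`, and every
vertex of `N(H)` sees at least one endpoint of every edge of `G[H]`. -/
def IsGenHandle {V : Type} (G : SimpleGraph V) (H : Set V) : Prop :=
  (∃ x ∈ H, ∃ y ∈ H, G.Adj x y) ∧ (∃ J, IsCohandleOf G J H) ∧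
  ∀ v ∈ Nset G H, ∀ x y, x ∈ H → y ∈ H → G.Adj x y → (G.Adj v x ∨ G.Adj v y)

/-- A graph is even-contractile if it can be turned into a clique by a sequence of
contractions of even pairs. -/
inductive EvenContractile : {V : Type} → SimpleGraph V → Prop where
  | of_clique {V : Type} (G : SimpleGraph V) (h : G.IsClique Set.univ) : EvenContractile G
  | of_contract {V : Type} (G : SimpleGraph V) (a b : V) (h : IsEvenPair G a b)
      (hc : EvenContractile (contract G a b)) : EvenContractile G

/-- Auxiliary: a connected induced walk from a vertex not satisfying `P` to one
satisfying `P` passes through a crossing edge. -/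
lemma exists_crossing_aux {W : Type} {H : SimpleGraph W} {T'' : Set W} (P : W → Prop) :
    ∀ {x y : ↥T''} (_p : (H.induce T'').Walk x y), ¬ P ↑x → P ↑y →
    ∃ z s : W, z ∈ T'' ∧ ¬ P z ∧ s ∈ T'' ∧ P s ∧ H.Adj z s := by
  intro x y p
  induction p with
  | nil => exact fun hx hy => absurd hy hx
  | @cons u w v h _p ih =>
    intro hx hy
    by_cases hP : P ↑w
    · exact ⟨↑u, ↑w, u.2, hx, w.2, hP, h⟩
    · exact ih hP hy

/-- If `T` is a maximal interesting set of `G`, `a, b` are non-adjacent vertices of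
`C(T)` and the set `C'(T)` of `T`-complete vertices of `G/ab` is not a clique of
`G/ab`, then `T` is a maximal interesting set of `G/ab`. -/
theorem maximal_interesting_of_contract
    {V : Type} [Fintype V] (G : SimpleGraph V) (T : Set V)
    (hT : IsMaximalInteresting G T) (a b : V)
    (ha : a ∈ Cset G T) (hb : b ∈ Cset G T) (hne : a ≠ b) (hnadj : ¬ G.Adj a b)
    (hnc : ¬ (contract G a b).IsClique
      (Cset (contract G a b) {z : {z : V // z ≠ b} | ↑z ∈ T})) :
    IsMaximalInteresting (contract G a b) {z : {z : V // z ≠ b} | ↑z ∈ T} := by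
  obtain ⟨⟨hTne, hTconn, _hTclq⟩, hTmax⟩ := hT
  obtain ⟨hanT, haadj⟩ := ha
  obtain ⟨hbnT, hbadj⟩ := hb
  have hTa : ∀ t ∈ T, t ≠ a := fun t ht h => hanT (h ▸ ht)
  have hTb : ∀ t ∈ T, t ≠ b := fun t ht h => hbnT (h ▸ ht)
  constructor
  · refine ⟨?_, ?_, hnc⟩
    · obtain ⟨t, ht⟩ := hTne
      exact ⟨⟨t, hTb t ht⟩, ht⟩
    · -- connectivity of the complement of the contraction induced on T
      have hmap : ∀ (x y : ↥T), (Gᶜ.induce T).Adj x y →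
          ((contract G a b)ᶜ.induce {z : {z : V // z ≠ b} | ↑z ∈ T}).Adj
            ⟨⟨x.1, hTb x.1 x.2⟩, by exact x.2⟩ ⟨⟨y.1, hTb y.1 y.2⟩, by exact y.2⟩ := by
        intro x y hxy
        have hxy' : x.1 ≠ y.1 ∧ ¬ G.Adj x.1 y.1 := by
          have := hxy
          rwa [SimpleGraph.comap_adj, SimpleGraph.compl_adj] at this
        show ((contract G a b)ᶜ).Adj _ _
        rw [SimpleGraph.compl_adj]
        constructor
        · intro h
          have h2 : (⟨x.1, hTb x.1 x.2⟩ : {z : V // z ≠ b}) = ⟨y.1, hTb y.1 y.2⟩ := h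
          exact hxy'.1 (by simpa using h2)
        · rintro ⟨-, h | ⟨h, -⟩ | ⟨h, -⟩⟩
          · exact hxy'.2 h
          · exact hTa x.1 x.2 h
          · exact hTa y.1 y.2 h
      let f : (Gᶜ.induce T) →g ((contract G a b)ᶜ.induce
          {z : {z : V // z ≠ b} | ↑z ∈ T}) :=
        ⟨fun x => ⟨⟨x.1, hTb x.1 x.2⟩, by exact x.2⟩, fun {x y} h => hmap x y h⟩
      rw [SimpleGraph.connected_iff]
      constructor
      · rintro ⟨⟨x1, hx1b⟩, hx⟩ ⟨⟨y1, hy1b⟩, hy⟩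
        exact (hTconn.preconnected ⟨x1, hx⟩ ⟨y1, hy⟩).map f
      · obtain ⟨t, ht⟩ := hTne
        exact ⟨⟨⟨t, hTb t ht⟩, ht⟩⟩
  · intro T'' hint hsub
    obtain ⟨hT''ne, hT''conn, hT''clq⟩ := hint
    refine Set.Subset.antisymm ?_ hsub
    intro z0 hz0T''
    by_contra hz0T
    -- find a crossing complement-edge (z, s), z ∉ T, s ∈ T
    obtain ⟨t0, ht0⟩ := hTne
    have ht0T'' : (⟨t0, hTb t0 ht0⟩ : {z : V // z ≠ b}) ∈ T'' := hsub ht0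
    obtain ⟨p⟩ := hT''conn.preconnected ⟨z0, hz0T''⟩ ⟨⟨t0, hTb t0 ht0⟩, ht0T''⟩
    obtain ⟨z, s, hzT'', hzT, hsT'', hsT, hadj⟩ :=
      exists_crossing_aux (H := (contract G a b)ᶜ) (T'' := T'')
        (fun w => (w : V) ∈ T) p hz0T ht0
    rw [SimpleGraph.compl_adj] at hadj
    have hza : (z : V) ≠ a := by
      intro h
      exact hadj.2 ⟨hadj.1, Or.inl (by rw [h]; exact haadj s.1 hsT)⟩
    have hzs : ¬ G.Adj (z : V) (s : V) := fun h2 => hadj.2 ⟨hadj.1, Or.inl h2⟩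
    -- the lifted set S = T ∪ {z}
    set S : Set V := insert (z : V) T with hS
    have hTS : T ⊆ S := Set.subset_insert _ _
    have hzS : (z : V) ∈ S := Set.mem_insert _ _
    -- S is interesting in G
    have hSne : S.Nonempty := ⟨(z : V), hzS⟩
    have hSconn : (Gᶜ.induce S).Connected := by
      let g : (Gᶜ.induce T) →g (Gᶜ.induce S) :=
        ⟨fun x => ⟨x.1, hTS x.2⟩, fun {x y} h => h⟩
      have hbase : ∀ x : ↥S, (Gᶜ.induce S).Reachable x ⟨(s : V), hTS hsT⟩ := by
        rintro ⟨x, hx⟩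
        rcases hx with hx | hx
        · have hedge : (Gᶜ.induce S).Adj ⟨x, Or.inl hx⟩ ⟨(s : V), hTS hsT⟩ := by
            show Gᶜ.Adj x (s : V)
            rw [SimpleGraph.compl_adj]
            subst hx
            exact ⟨fun h => hadj.1 (Subtype.ext h), hzs⟩
          exact hedge.reachable
        · exact (hTconn.preconnected ⟨x, hx⟩ ⟨(s : V), hsT⟩).map g
      rw [SimpleGraph.connected_iff]
      exact ⟨fun x y => (hbase x).trans (hbase y).symm, ⟨⟨(z : V), hzS⟩⟩⟩
    -- lifting T''-complete vertices of the contraction into C_G(S)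
    have hlift : ∀ w : {z : V // z ≠ b}, w ∈ Cset (contract G a b) T'' →
        w ≠ (⟨a, hne⟩ : {z : V // z ≠ b}) → (w : V) ∈ Cset G S := by
      rintro w ⟨hwT'', hwadj⟩ hwc
      have hwa : (w : V) ≠ a := fun h => hwc (Subtype.ext h)
      constructor
      · intro hmem
        rcases hmem with hmem | hmem
        · exact hwT'' ((Subtype.ext hmem : w = z) ▸ hzT'')
        · exact hwT'' (hsub hmem)
      · intro t htS
        rcases htS with htz | htT
        · subst htz
          obtain ⟨-, h | ⟨h, -⟩ | ⟨h, -⟩⟩ := hwadj z hzT''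
          · exact h
          · exact absurd h hwa
          · exact absurd h hza
        · obtain ⟨-, h | ⟨h, -⟩ | ⟨h, -⟩⟩ := hwadj ⟨t, hTb t htT⟩ (hsub htT)
          · exact h
          · exact absurd h hwa
          · exact absurd h (hTa t htT)
    -- non-clique witnesses in the contraction
    have hwit : ∃ u ∈ Cset (contract G a b) T'', ∃ v ∈ Cset (contract G a b) T'',
        u ≠ v ∧ ¬ (contract G a b).Adj u v := by
      by_contra h
      push_neg at h
      exact hT''clq (fun {u} hu {v} hv huv => h u hu v hv huv)
    obtain ⟨u, hu, v, hv, huv, hnuv⟩ := hwit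
    -- the key case analysis: C_G(S) is not a clique
    have haux : ∀ v₁ : {z : V // z ≠ b}, v₁ ∈ Cset (contract G a b) T'' →
        v₁ ≠ (⟨a, hne⟩ : {z : V // z ≠ b}) →
        ¬ (contract G a b).Adj (⟨a, hne⟩ : {z : V // z ≠ b}) v₁ →
        (⟨a, hne⟩ : {z : V // z ≠ b}) ∈ Cset (contract G a b) T'' →
        ¬ G.IsClique (Cset G S) := by
      intro v₁ hv₁ hv₁c hncv₁ hc
      have hv₁a : (v₁ : V) ≠ a := fun h => hv₁c (Subtype.ext h)
      have hva : ¬ G.Adj a (v₁ : V) := by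
        intro h
        exact hncv₁ ⟨fun h' => hv₁c h'.symm, Or.inl h⟩
      have hvb : ¬ G.Adj b (v₁ : V) := by
        intro h
        exact hncv₁ ⟨fun h' => hv₁c h'.symm, Or.inr (Or.inl ⟨rfl, h⟩)⟩
      have hvS : (v₁ : V) ∈ Cset G S := hlift v₁ hv₁ hv₁c
      obtain ⟨-, hz' | ⟨-, hz'⟩ | ⟨hz', -⟩⟩ := hc.2 z hzT''
      · -- a is adjacent to z : the pair (a, v₁) works
        have haS : a ∈ Cset G S := by
          constructor
          · intro hmem
            rcases hmem with hmem | hmem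
            · exact hza hmem.symm
            · exact hanT hmem
          · intro t htS
            rcases htS with htz | htT
            · subst htz; exact hz'
            · exact haadj t htT
        intro hclq
        exact hva (hclq haS hvS (fun h => hv₁a h.symm))
      · -- b is adjacent to z : the pair (b, v₁) works
        have hbS : b ∈ Cset G S := by
          constructor
          · intro hmem
            rcases hmem with hmem | hmem
            · exact z.2 hmem.symm
            · exact hbnT hmem
          · intro t htS
            rcases htS with htz | htT
            · subst htz; exact hz'
            · exact hbadj t htT
        intro hclq
        exact hvb (hclq hbS hvS (fun h => v₁.2 h.symm))
      · exact absurd hz' hza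
    have hSclq : ¬ G.IsClique (Cset G S) := by
      by_cases huc : u = (⟨a, hne⟩ : {z : V // z ≠ b})
      · subst huc
        exact haux v hv (fun h => huv h.symm) hnuv hu
      · by_cases hvc : v = (⟨a, hne⟩ : {z : V // z ≠ b})
        · subst hvc
          exact haux u hu huc (fun h => hnuv h.symm) hv
        · -- neither witness is the contracted vertex
          have huS : (u : V) ∈ Cset G S := hlift u hu huc
          have hvS : (v : V) ∈ Cset G S := hlift v hv hvc
          have hne' : (u : V) ≠ (v : V) := fun h => huv (Subtype.ext h)
          have hnadj' : ¬ G.Adj (u : V) (v : V) :=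
            fun h => hnuv ⟨huv, Or.inl h⟩
          intro hclq
          exact hnadj' (hclq huS hvS hne')
    have hST := hTmax S ⟨hSne, hSconn, hSclq⟩ hTS
    exact hzT (hST ▸ hzS)
end

section
/- Let T be an interesting set in a finite simple graph G. If there is a vertex u ∈ V(G)∖(T∪C(T)) such that N(u)∩C(T) is not a clique of G, then T∪{u} is an interesting set of G. -/
open SimpleGraph

/-- If `T` is interesting and `u ∉ T ∪ C(T)` is a vertex such that `N(u) ∩ C(T)` is not
a clique, then `T ∪ {u}` is interesting. -/
theorem insert_interesting_of_neighbor_not_clique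
    {V : Type} [Fintype V] (G : SimpleGraph V) (T : Set V) (hT : IsInteresting G T)
    (u : V) (hu : u ∉ T ∪ Cset G T)
    (hnc : ¬ G.IsClique (G.neighborSet u ∩ Cset G T)) :
    IsInteresting G (T ∪ {u}) := by
  obtain ⟨hne, hconn, hclique⟩ := hT
  have hu' : u ∉ T := fun h => hu (Or.inl h)
  have huC : u ∉ Cset G T := fun h => hu (Or.inr h)
  have hex : ∃ t ∈ T, ¬ G.Adj u t := by
    by_contra h; push_neg at h
    exact huC ⟨hu', h⟩
  obtain ⟨t, htT, hnadj⟩ := hex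
  have hut : u ≠ t := fun h => hu' (h ▸ htT)
  refine ⟨⟨t, Or.inl htT⟩, ?_, ?_⟩
  · rw [SimpleGraph.connected_iff]
    refine ⟨?_, ⟨⟨t, Or.inl htT⟩⟩⟩
    let f : Gᶜ.induce T →g Gᶜ.induce (T ∪ {u}) :=
      ⟨fun v => ⟨v.1, Or.inl v.2⟩, fun {a b} h => h⟩
    have key : ∀ v (hv : v ∈ T ∪ {u}),
        (Gᶜ.induce (T ∪ {u})).Reachable ⟨v, hv⟩ ⟨t, Or.inl htT⟩ := by
      intro v hv
      rcases hv with hvT | hvu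
      · exact (hconn.preconnected ⟨v, hvT⟩ ⟨t, htT⟩).map f
      · have hvu' : v = u := hvu
        refine SimpleGraph.Adj.reachable ?_
        show Gᶜ.Adj v t
        rw [SimpleGraph.compl_adj, hvu']
        exact ⟨hut, hnadj⟩
    intro a b
    exact (key a.1 a.2).trans (key b.1 b.2).symm
  · intro hcl
    apply hnc
    apply hcl.subset
    rintro x ⟨hxN, hxC⟩
    have hadj : G.Adj u x := hxN
    refine ⟨?_, ?_⟩
    · rintro (hxT | hxu)
      · exact hxC.1 hxT
      · exact G.loopless.irrefl u (by rwa [show x = u from hxu] at hadj)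
    · rintro s (hsT | hsu)
      · exact hxC.2 s hsT
      · rw [show s = u from hsu]; exact hadj.symm
end

section
/- Let T be an interesting set in a finite simple graph G. If for every vertex u ∈ V(G)∖(T∪C(T)) the set N(u)∩C(T) is a clique of G, then T is a maximal interesting set of G. -/
open SimpleGraph

/-- If `T` is interesting and for every vertex `u ∉ T ∪ C(T)` the set `N(u) ∩ C(T)` is
a clique, then `T` is a maximal interesting set. -/
theorem maximal_interesting_of_all_neighbors_clique
    {V : Type} [Fintype V] (G : SimpleGraph V) (T : Set V) (hT : IsInteresting G T)
    (h : ∀ u : V, u ∉ T ∪ Cset G T → G.IsClique (G.neighborSet u ∩ Cset G T)) :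
    IsMaximalInteresting G T := by
  refine ⟨hT, fun T' hT' hsub => ?_⟩
  by_contra hne
  -- there is a vertex of `T'` outside `T`
  obtain ⟨u0, hu0T', hu0T⟩ : ∃ u0, u0 ∈ T' ∧ u0 ∉ T := by
    by_contra hc
    push_neg at hc
    exact hne (Set.Subset.antisymm hc hsub)
  obtain ⟨t0, ht0⟩ := hT.1
  -- connectivity of complement on T' gives a crossing edge
  obtain ⟨hne', hconn, hnotclique'⟩ := hT'
  have hreach := hconn.preconnected ⟨t0, hsub ht0⟩ ⟨u0, hu0T'⟩
  obtain ⟨p⟩ := hreach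
  obtain ⟨d, -, hdfst, hdsnd⟩ :=
    p.exists_boundary_dart {v : T' | v.1 ∈ T} ht0 hu0T
  have hadj : (Gᶜ.induce T').Adj d.fst d.snd := d.adj
  have hadj' : Gᶜ.Adj d.fst.1 d.snd.1 := hadj
  rw [compl_adj] at hadj'
  set u : V := d.snd.1 with hu
  have huT' : u ∈ T' := d.snd.2
  have huT : u ∉ T := hdsnd
  have hnadj : ¬ G.Adj u d.fst.1 := fun ha => hadj'.2 ha.symm
  have huC : u ∉ Cset G T := fun ⟨_, hall⟩ => hnadj (hall d.fst.1 hdfst)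
  have hclique := h u (by
    intro hmem
    rcases hmem with hm | hm
    · exact huT hm
    · exact huC hm)
  -- C(T') is not a clique : get two nonadjacent vertices
  rw [SimpleGraph.isClique_iff, Set.Pairwise] at hnotclique'
  push_neg at hnotclique'
  obtain ⟨x, hx, y, hy, hxy, hnadjxy⟩ := hnotclique'
  obtain ⟨hxT', hxall⟩ := hx
  obtain ⟨hyT', hyall⟩ := hy
  have hxC : x ∈ Cset G T := ⟨fun hxt => hxT' (hsub hxt), fun t ht => hxall t (hsub ht)⟩
  have hyC : y ∈ Cset G T := ⟨fun hyt => hyT' (hsub hyt), fun t ht => hyall t (hsub ht)⟩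
  have hxN : x ∈ G.neighborSet u := (hxall u huT').symm
  have hyN : y ∈ G.neighborSet u := (hyall u huT').symm
  exact hnadjxy (hclique ⟨hxN, hxC⟩ ⟨hyN, hyC⟩ hxy)
end

section
/- Let G be a graph in the class 𝒜, let T be a maximal interesting set in G, and let x z₁ ⋯ z_p y be a minimal T-outer path. If a ∈ C(T) is adjacent to z₁ and non-adjacent to y, then a is adjacent to none of z₂,…,z_p; symmetrically, if b ∈ C(T) is adjacent to z_p and non-adjacent to x, then b is adjacent to none of z₁,…,z_{p−1}. -/
open SimpleGraph

private lemma aux_getVert_inj {V : Type} {G : SimpleGraph V} {x y : V} (p : G.Walk x y)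
    (hp : p.IsPath) : ∀ i j, i ≤ p.length → j ≤ p.length → p.getVert i = p.getVert j → i = j := by
  induction p with
  | nil => intro i j hi hj _; simp at hi hj; omega
  | cons h w ih =>
    intro i j hi hj hij
    rw [SimpleGraph.Walk.cons_isPath_iff] at hp
    match i, j with
    | 0, 0 => rfl
    | 0, j+1 =>
      exfalso; apply hp.2
      rw [SimpleGraph.Walk.mem_support_iff_exists_getVert]
      exact ⟨j, by simpa using hij.symm, by simpa using hj⟩
    | i+1, 0 =>
      exfalso; apply hp.2
      rw [SimpleGraph.Walk.mem_support_iff_exists_getVert]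
      exact ⟨i, by simpa using hij, by simpa using hi⟩
    | i+1, j+1 =>
      have := ih hp.1 i j (by simpa using hi) (by simpa using hj) (by simpa using hij)
      omega

private lemma aux_exists_suffix {V : Type} {G : SimpleGraph V} (a : V) :
    ∀ {u y : V} (w : G.Walk u y), (∃ t ∈ w.support, G.Adj a t) →
    ∃ (z : V) (pre : G.Walk u z) (s : G.Walk z y), pre.append s = w ∧ G.Adj a z ∧
      ∀ t ∈ s.support.tail, ¬ G.Adj a t := by
  intro u y w
  induction w with
  | nil =>
    rintro ⟨t, ht, hat⟩
    simp only [SimpleGraph.Walk.support_nil, List.mem_singleton] at ht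
    subst ht
    exact ⟨_, .nil, .nil, rfl, hat, by intro v hv; simp at hv⟩
  | @cons u u' y h w ih =>
    rintro ⟨t, ht, hat⟩
    by_cases hcase : ∃ t ∈ w.support, G.Adj a t
    · obtain ⟨z, pre, s, happ, haz, htail⟩ := ih hcase
      exact ⟨z, .cons h pre, s, by rw [SimpleGraph.Walk.cons_append, happ], haz, htail⟩
    · push_neg at hcase
      have htu : t = u := by
        rw [SimpleGraph.Walk.support_cons, List.mem_cons] at ht
        rcases ht with rfl | ht
        · rfl
        · exact absurd hat (hcase t ht)
      subst htu
      refine ⟨t, .nil, .cons h w, by rw [SimpleGraph.Walk.nil_append], hat, ?_⟩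
      intro v hv
      rw [SimpleGraph.Walk.support_cons, List.tail_cons] at hv
      exact hcase v hv

private lemma aux_minimal_reverse {V : Type} {G : SimpleGraph V} (T : Set V) {x y : V}
    (p : G.Walk x y) (hp : IsMinimalOuterPath G T p) : IsMinimalOuterPath G T p.reverse := by
  obtain ⟨⟨hxy, ⟨hpath, hch⟩, hxC, hyC, hint⟩, hmin⟩ := hp
  have hmemrev : ∀ v, v ∈ p.reverse.support ↔ v ∈ p.support := by
    intro v; rw [SimpleGraph.Walk.support_reverse, List.mem_reverse]
  refine ⟨⟨hxy.symm, ⟨hpath.reverse, ?_⟩, hyC, hxC, ?_⟩, ?_⟩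
  · intro u v hu hv huv
    rw [SimpleGraph.Walk.toSubgraph_reverse]
    exact hch u v ((hmemrev u).1 hu) ((hmemrev v).1 hv) huv
  · intro v hv h1 h2
    exact hint v ((hmemrev v).1 hv) h2 h1
  · rintro ⟨x', y', q, hq, hss⟩
    apply hmin
    refine ⟨x', y', q, hq, ?_⟩
    have heq : walkInterior p.reverse = walkInterior p := by
      ext v
      constructor
      · rintro ⟨h1, h2, h3⟩; exact ⟨(hmemrev v).1 h1, h3, h2⟩
      · rintro ⟨h1, h2, h3⟩; exact ⟨(hmemrev v).2 h1, h3, h2⟩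
    rwa [heq] at hss

private lemma aux_core {V : Type} {G : SimpleGraph V} (T : Set V) {x y : V}
    (p : G.Walk x y) (hp : IsMinimalOuterPath G T p) (a : V) (ha : a ∈ Cset G T)
    (ha1 : G.Adj a (p.getVert 1)) (hay : ¬ G.Adj a y) :
    ∀ i, 2 ≤ i → i ≤ p.length - 1 → ¬ G.Adj a (p.getVert i) := by
  intro i₀ hi2 hi1 hadj
  obtain ⟨⟨hxy, ⟨hpath, hch⟩, hxC, hyC, hint⟩, hmin⟩ := hp
  have hq3 : 3 ≤ p.length := by omega
  have hinj := aux_getVert_inj p hpath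
  have hmem : ∀ i, i ≤ p.length → p.getVert i ∈ p.support := fun i hi =>
    SimpleGraph.Walk.mem_support_iff_exists_getVert.mpr ⟨i, rfl, by omega⟩
  have hgx : p.getVert 0 = x := p.getVert_zero
  have hgy : p.getVert p.length = y := p.getVert_length
  have hne_idx : ∀ i j, i ≤ p.length → j ≤ p.length → i ≠ j → p.getVert i ≠ p.getVert j :=
    fun i j hi hj hne h => hne (hinj i j hi hj h)
  have hchidx : ∀ i j, i ≤ p.length → j ≤ p.length → G.Adj (p.getVert i) (p.getVert j) →
      (j = i + 1 ∧ i + 1 ≤ p.length) ∨ (i = j + 1 ∧ j + 1 ≤ p.length) := by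
    intro i j hi hj hij
    have h2 := hch _ _ (hmem i hi) (hmem j hj) hij
    rw [SimpleGraph.Walk.toSubgraph_adj_iff] at h2
    obtain ⟨m, hm, hmlt⟩ := h2
    rw [Sym2.eq_iff] at hm
    rcases hm with ⟨hm1, hm2⟩ | ⟨hm1, hm2⟩
    · have e1 := hinj m i (by omega) hi hm1
      have e2 := hinj (m+1) j (by omega) hj hm2
      omega
    · have e1 := hinj m j (by omega) hj hm1
      have e2 := hinj (m+1) i (by omega) hi hm2
      omega
  have hanotin : a ∉ p.support := by
    intro hmem_a
    obtain ⟨j, hj, hjq⟩ := SimpleGraph.Walk.mem_support_iff_exists_getVert.mp hmem_a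
    rcases Nat.eq_zero_or_pos j with rfl | hj1
    · rw [← hj] at hadj
      rcases hchidx 0 i₀ (by omega) (by omega) hadj with ⟨h, _⟩ | ⟨h, _⟩ <;> omega
    · rcases Nat.lt_or_ge j p.length with hjq' | hjq'
      · refine hint a hmem_a ?_ ?_ (Or.inr ha)
        · have h := hne_idx j 0 (by omega) (by omega) (by omega)
          rwa [hj, hgx] at h
        · have h := hne_idx j p.length (by omega) le_rfl (by omega)
          rwa [hj, hgy] at h
      · have hjq'' : j = p.length := by omega
        subst hjq''
        rw [← hj] at ha1
        rcases hchidx p.length 1 le_rfl (by omega) ha1 with ⟨h, hle⟩ | ⟨h, hle⟩ <;> omega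
  obtain ⟨z, pre, s, happ, haz, htail⟩ :=
    aux_exists_suffix a p ⟨p.getVert i₀, hmem i₀ (by omega), hadj⟩
  have hlen_add : pre.length + s.length = p.length := by
    rw [← happ, SimpleGraph.Walk.length_append]
  have hpre_getVert : ∀ j, j ≤ pre.length → p.getVert j = pre.getVert j := by
    intro j hj
    rcases Nat.lt_or_ge j pre.length with h | h
    · rw [← happ, SimpleGraph.Walk.getVert_append, if_pos h]
    · have hjk : j = pre.length := by omega
      subst hjk
      rw [← happ, SimpleGraph.Walk.getVert_append, if_neg (lt_irrefl _), Nat.sub_self,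
        SimpleGraph.Walk.getVert_zero, SimpleGraph.Walk.getVert_length]
  have hs_getVert : ∀ m, p.getVert (pre.length + m) = s.getVert m := by
    intro m
    rw [← happ, SimpleGraph.Walk.getVert_append, if_neg (by omega), Nat.add_sub_cancel_left]
  have hzk : p.getVert pre.length = z := by
    rw [hpre_getVert pre.length le_rfl]; exact pre.getVert_length
  have hs_mem : ∀ v, v ∈ s.support → ∃ m, m ≤ s.length ∧ p.getVert (pre.length + m) = v := by
    intro v hv
    obtain ⟨m, hm, hmle⟩ := SimpleGraph.Walk.mem_support_iff_exists_getVert.mp hv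
    exact ⟨m, hmle, by rw [hs_getVert]; exact hm⟩
  have hsub : ∀ v, v ∈ s.support → v ∈ p.support := by
    intro v hv
    obtain ⟨m, hmle, hm⟩ := hs_mem v hv
    exact hm ▸ hmem (pre.length + m) (by omega)
  have hsupp_split : p.support = pre.support ++ s.support.tail := by
    rw [← happ, SimpleGraph.Walk.support_append]
  have hk2 : 2 ≤ pre.length := by
    have hiin : p.getVert i₀ ∈ pre.support := by
      have h3 := hmem i₀ (by omega)
      rw [hsupp_split, List.mem_append] at h3
      rcases h3 with h | h
      · exact h
      · exact absurd hadj (htail _ h)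
    obtain ⟨j, hj, hjk⟩ := SimpleGraph.Walk.mem_support_iff_exists_getVert.mp hiin
    have h4 : p.getVert j = p.getVert i₀ := by rw [hpre_getVert j hjk]; exact hj
    have := hinj j i₀ (by omega) (by omega) h4
    omega
  have hky : pre.length ≠ p.length := by
    intro h
    apply hay
    rw [h, hgy] at hzk
    rwa [← hzk] at haz
  have hcap : ∀ v, v ∈ pre.support → v ∈ s.support → v = z := by
    intro v hv1 hv2
    obtain ⟨j, hj, hjk⟩ := SimpleGraph.Walk.mem_support_iff_exists_getVert.mp hv1
    obtain ⟨m, hmle, hm⟩ := hs_mem v hv2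
    have h4 : p.getVert j = p.getVert (pre.length + m) := by rw [hpre_getVert j hjk, hj, hm]
    have h5 := hinj j (pre.length + m) (by omega) (by omega) h4
    have hm0 : m = 0 := by omega
    rw [← hm, hm0, Nat.add_zero, hzk]
  have hadjz : ∀ v ∈ s.support, G.Adj a v → v = z := by
    intro v hv hva
    rw [SimpleGraph.Walk.support_eq_cons] at hv
    rcases List.mem_cons.mp hv with rfl | h
    · rfl
    · exact absurd hva (htail v h)
  have hspath : s.IsPath := by
    rw [← happ] at hpath
    exact hpath.of_append_right
  have hanot_s : a ∉ s.support := fun h => hanotin (hsub a h)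
  have hWpath : (SimpleGraph.Walk.cons haz s).IsPath := by
    rw [SimpleGraph.Walk.cons_isPath_iff]; exact ⟨hspath, hanot_s⟩
  have hWch : IsChordless G (SimpleGraph.Walk.cons haz s) := by
    refine ⟨hWpath, ?_⟩
    intro u v hu hv huv
    rw [SimpleGraph.Walk.support_cons, List.mem_cons] at hu hv
    have hside : ∀ w, w ∈ s.support → G.Adj a w →
        (SimpleGraph.Walk.cons haz s).toSubgraph.Adj a w := by
      intro w hw haw
      have hwz := hadjz w hw haw
      subst hwz
      exact SimpleGraph.Subgraph.sup_adj.mpr (Or.inl (by simp))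
    rcases hu with rfl | hu
    · rcases hv with rfl | hv
      · exact absurd rfl huv.ne
      · exact hside v hv huv
    · rcases hv with rfl | hv
      · exact (hside u hu huv.symm).symm
      · have hp_adj := hch u v (hsub u hu) (hsub v hv) huv
        rw [← happ, SimpleGraph.Walk.toSubgraph_append, SimpleGraph.Subgraph.sup_adj] at hp_adj
        rcases hp_adj with h | h
        · exfalso
          have hu' : u = z :=
            hcap u ((pre.mem_verts_toSubgraph).mp h.fst_mem) hu
          have hv' : v = z :=
            hcap v ((pre.mem_verts_toSubgraph).mp h.snd_mem) hv
          rw [hu', hv'] at huv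
          exact huv.ne rfl
        · exact SimpleGraph.Subgraph.sup_adj.mpr (Or.inr h)
  have ha_ne_y : a ≠ y := fun h => hanotin (h ▸ p.end_mem_support)
  have hWint : ∀ v ∈ (SimpleGraph.Walk.cons haz s).support, v ≠ a → v ≠ y →
      v ∈ p.support ∧ v ≠ x := by
    intro v hv hva hvy
    rw [SimpleGraph.Walk.support_cons, List.mem_cons] at hv
    rcases hv with rfl | hv
    · exact absurd rfl hva
    obtain ⟨m, hmle, hm⟩ := hs_mem v hv
    refine ⟨hsub v hv, ?_⟩
    have h := hne_idx (pre.length + m) 0 (by omega) (by omega) (by omega)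
    rwa [hm, hgx] at h
  have hWouter : IsOuterPath G T (SimpleGraph.Walk.cons haz s) := by
    refine ⟨ha_ne_y, hWch, ha, hyC, ?_⟩
    intro v hv hva hvy
    obtain ⟨h1, h2⟩ := hWint v hv hva hvy
    exact hint v h1 h2 hvy
  apply hmin
  refine ⟨a, y, SimpleGraph.Walk.cons haz s, hWouter, ?_⟩
  rw [Set.ssubset_def]
  constructor
  · rintro v ⟨hv, hva, hvy⟩
    obtain ⟨h1, h2⟩ := hWint v hv hva hvy
    exact ⟨h1, h2, hvy⟩
  · intro hcon
    have h1 : p.getVert 1 ∈ walkInterior p := by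
      refine ⟨hmem 1 (by omega), ?_, ?_⟩
      · have h := hne_idx 1 0 (by omega) (by omega) (by omega)
        rwa [hgx] at h
      · have h := hne_idx 1 p.length (by omega) le_rfl (by omega)
        rwa [hgy] at h
    obtain ⟨hv, hva, hvy⟩ := hcon h1
    rw [SimpleGraph.Walk.support_cons, List.mem_cons] at hv
    rcases hv with h | h
    · exact hva h
    · obtain ⟨m, hmle, hm⟩ := hs_mem _ h
      have := hinj (pre.length + m) 1 (by omega) (by omega) hm
      omega

/-- For a minimal `T`-outer path `x z₁ ⋯ z_q y` in `G ∈ 𝒜`: any `a ∈ C(T)` adjacent to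
`z₁` and non-adjacent to `y` is adjacent to none of `z₂, …, z_q`; symmetrically, any
`b ∈ C(T)` adjacent to `z_q` and non-adjacent to `x` is adjacent to none of
`z₁, …, z_{q-1}`. -/
theorem setA_setB_characterization
    {V : Type} [Fintype V] (G : SimpleGraph V) (hG : InArtemis G)
    (T : Set V) (hT : IsMaximalInteresting G T)
    (x y : V) (p : G.Walk x y) (hp : IsMinimalOuterPath G T p) (hlen : 2 ≤ p.length) :
    (∀ a ∈ Cset G T, G.Adj a (p.getVert 1) → ¬ G.Adj a y →
      ∀ i, 2 ≤ i → i ≤ p.length - 1 → ¬ G.Adj a (p.getVert i)) ∧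
    (∀ b ∈ Cset G T, G.Adj b (p.getVert (p.length - 1)) → ¬ G.Adj b x →
      ∀ i, 1 ≤ i → i ≤ p.length - 2 → ¬ G.Adj b (p.getVert i)) := by
  constructor
  · intro a ha ha1 hay
    exact aux_core T p hp a ha ha1 hay
  · intro b hb hb1 hbx i hi1 hi2
    have hrev := aux_minimal_reverse T p hp
    have h1 : G.Adj b (p.reverse.getVert 1) := by
      rw [SimpleGraph.Walk.getVert_reverse]; exact hb1
    have hlr : p.reverse.length = p.length := SimpleGraph.Walk.length_reverse p
    have h2 := aux_core T p.reverse hrev b hb h1 hbx (p.length - i)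
      (by omega) (by rw [hlr]; omega)
    rw [SimpleGraph.Walk.getVert_reverse] at h2
    have h3 : p.length - (p.length - i) = i := by omega
    rw [h3] at h2
    exact h2
end

section
/- Let T be a maximal interesting set in a finite simple graph G, and let H be a connected component of the complement graph restricted to C(T) (i.e., of the subgraph of the complement of G induced by C(T)) having size at least 2. Then H is a handle of the complement graph of G, and T is a co-handle of H in the complement graph of G. -/
open SimpleGraph

section Helpers
variable {V : Type} {G : SimpleGraph V} {T : Set V}

lemma nset_compl_T (G : SimpleGraph V) (T : Set V) : Nset Gᶜ T = (T ∪ Cset G T)ᶜ := by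
  ext v
  simp only [Nset, Cset, Set.mem_setOf_eq, Set.mem_compl_iff, Set.mem_union, compl_adj]
  constructor
  · rintro ⟨hvT, t, ht, hne, hadj2⟩
    push_neg
    exact ⟨hvT, fun _ => ⟨t, ht, hadj2⟩⟩
  · intro h
    push_neg at h
    obtain ⟨hvT, h2⟩ := h
    obtain ⟨t, ht, hna⟩ := h2 hvT
    exact ⟨hvT, t, ht, fun he => hvT (he ▸ ht), hna⟩

lemma clique_of_maximal (hT : IsMaximalInteresting G T) {v : V}
    (hv1 : v ∉ T) (hv2 : v ∉ Cset G T) : G.IsClique (Cset G (insert v T)) := by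
  by_contra hcl
  have hex : ∃ t ∈ T, ¬ G.Adj v t := by
    by_contra hall
    push_neg at hall
    exact hv2 ⟨hv1, hall⟩
  obtain ⟨t, ht, hna⟩ := hex
  have hadj : Gᶜ.Adj v t := by
    rw [compl_adj]; exact ⟨fun he => hv1 (he ▸ ht), hna⟩
  have hins : insert v T = {v, t} ∪ T := by
    ext u; simp only [Set.mem_insert_iff, Set.mem_union]; constructor
    · rintro (h | h); exacts [Or.inl (Or.inl h), Or.inr h]
    · rintro ((h | h) | h); exacts [Or.inl h, Or.inr (h ▸ ht), Or.inr h]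
  have hconn : (Gᶜ.induce (insert v T)).Connected := by
    rw [hins]
    exact induce_union_connected (induce_pair_connected_of_adj hadj).preconnected hT.1.2.1.preconnected
      ⟨t, by simp [ht]⟩
  have : IsInteresting G (insert v T) := ⟨⟨v, Set.mem_insert v T⟩, hconn, hcl⟩
  exact hv1 (hT.2 _ this (Set.subset_insert v T) ▸ Set.mem_insert v T)

lemma supp_closed {K : SimpleGraph V} {s : Set V} (c : (K.induce s).ConnectedComponent)
    {x y : s} (hx : x ∈ c.supp) (hadj : (K.induce s).Adj x y) : y ∈ c.supp := by
  rw [ConnectedComponent.mem_supp_iff] at hx ⊢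
  rw [← hx]
  exact ConnectedComponent.sound hadj.symm.reachable

lemma image_supp_closed {K : SimpleGraph V} {s : Set V}
    (c : (K.induce s).ConnectedComponent) {x y : V}
    (hx : x ∈ Subtype.val '' c.supp) (hy : y ∈ s) (h : K.Adj x y) :
    y ∈ Subtype.val '' c.supp := by
  obtain ⟨x', hx', rfl⟩ := hx
  exact ⟨⟨y, hy⟩, supp_closed c hx' h, rfl⟩

lemma reach_in_image {K : SimpleGraph V} {s : Set V} (c : (K.induce s).ConnectedComponent) :
    ∀ (u v : ↥s) (_ : (K.induce s).Walk u v) (hu : u ∈ c.supp),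
      ∃ (hv : v ∈ c.supp),
      (K.induce (Subtype.val '' c.supp)).Reachable ⟨u.1, ⟨u, hu, rfl⟩⟩ ⟨v.1, ⟨v, hv, rfl⟩⟩ := by
  intro u v p
  induction p with
  | nil => intro hu; exact ⟨hu, Reachable.refl _⟩
  | @cons a m e h q ih =>
    intro ha
    have hm : m ∈ c.supp := supp_closed c ha h
    obtain ⟨he, hr⟩ := ih hm
    have hadj : (K.induce (Subtype.val '' c.supp)).Adj ⟨a.1, ⟨a, ha, rfl⟩⟩ ⟨m.1, ⟨m, hm, rfl⟩⟩ := h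
    exact ⟨he, hadj.reachable.trans hr⟩

lemma induce_image_supp_connected {K : SimpleGraph V} {s : Set V}
    (c : (K.induce s).ConnectedComponent) (hne : (Subtype.val '' c.supp).Nonempty) :
    (K.induce (Subtype.val '' c.supp)).Connected := by
  have hnonempty : Nonempty ↑(Subtype.val '' c.supp) := ⟨⟨hne.choose, hne.choose_spec⟩⟩
  refine ⟨fun x y => ?_⟩
  obtain ⟨x, hx⟩ := x
  obtain ⟨y, hy⟩ := y
  obtain ⟨x', hx', rfl⟩ := hx
  obtain ⟨y', hy', rfl⟩ := hy
  have hreach : (K.induce s).Reachable x' y' := by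
    rw [ConnectedComponent.mem_supp_iff] at hx' hy'
    exact ConnectedComponent.exact (hx'.trans hy'.symm)
  obtain ⟨p⟩ := hreach
  obtain ⟨hy'', hr⟩ := reach_in_image c x' y' p hx'
  exact hr

lemma exists_adj_of_connected {K : SimpleGraph V} {s : Set V} (h : (K.induce s).Connected)
    (hs : s.Finite) (hcard : 2 ≤ s.ncard) : ∃ x ∈ s, ∃ y ∈ s, K.Adj x y := by
  obtain ⟨x, y, hx, hy, hxy⟩ := (Set.one_lt_ncard_iff hs).mp hcard
  obtain ⟨p⟩ := h.preconnected (⟨x, hx⟩ : ↥s) (⟨y, hy⟩ : ↥s)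
  have hne : (⟨x, hx⟩ : ↥s) ≠ (⟨y, hy⟩ : ↥s) := fun he => hxy (congrArg Subtype.val he)
  have hnil : ¬ p.Nil := SimpleGraph.Walk.not_nil_of_ne hne
  exact ⟨x, hx, (p.getVert 1).1, (p.getVert 1).2, p.adj_snd hnil⟩


end Helpers

section Helpers2
variable {V : Type}

lemma walk_stays_T (G : SimpleGraph V) (T : Set V) :
    ∀ (u v : ↥(T ∪ Cset G T)) (_ : (Gᶜ.induce (T ∪ Cset G T)).Walk u v), u.1 ∈ T → v.1 ∈ T := by
  intro u v p
  induction p with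
  | nil => exact id
  | @cons a m e h q ih =>
    intro ha
    apply ih
    rcases m.2 with hm | hm
    · exact hm
    · exact absurd (hm.2 a.1 ha).symm ((compl_adj ..).mp h).2

end Helpers2

/-- If `T` is a maximal interesting set of `G` and `H` is a connected component of
`Gᶜ[C(T)]` of size at least 2, then `H` is a handle of `Gᶜ` and `T` is a co-handle of
`H` in `Gᶜ`. -/
theorem component_of_compl_Cset_is_handle
    {V : Type} [Fintype V] (G : SimpleGraph V) (T : Set V)
    (hT : IsMaximalInteresting G T)
    (c : (Gᶜ.induce (Cset G T)).ConnectedComponent) (H : Set V)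
    (hH : H = Subtype.val '' c.supp) (hcard : 2 ≤ H.ncard) :
    IsHandle Gᶜ H ∧ IsCohandleOf Gᶜ T H := by
  classical
  obtain ⟨⟨hTne, hTconn, hTnotclique⟩, hTmax⟩ := hT
  have hT' : IsMaximalInteresting G T := ⟨⟨hTne, hTconn, hTnotclique⟩, hTmax⟩
  have hHsub : H ⊆ Cset G T := by
    rintro x hx; rw [hH] at hx; obtain ⟨x', _, rfl⟩ := hx; exact x'.2
  have hHne : H.Nonempty := by
    rcases H.eq_empty_or_nonempty with he | hne
    · rw [he, Set.ncard_empty] at hcard; omega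
    · exact hne
  have hHconn : (Gᶜ.induce H).Connected := by
    rw [hH]; exact induce_image_supp_connected c (hH ▸ hHne)
  have hHedge : ∃ x ∈ H, ∃ y ∈ H, Gᶜ.Adj x y :=
    exists_adj_of_connected hHconn (Set.toFinite H) hcard
  have hNH : Nset Gᶜ H = (T ∪ Cset G T)ᶜ := by
    ext v
    simp only [Nset, Set.mem_setOf_eq, Set.mem_compl_iff, Set.mem_union]
    constructor
    · rintro ⟨hvH, x, hx, hadj⟩
      push_neg
      constructor
      · intro hvT
        exact ((compl_adj ..).mp hadj).2 ((hHsub hx).2 v hvT).symm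
      · intro hvC
        exact hvH (hH ▸ image_supp_closed c (hH ▸ hx) hvC hadj.symm)
    · intro hv
      push_neg at hv
      obtain ⟨hvT, hvC⟩ := hv
      have hvH : v ∉ H := fun h => hvC (hHsub h)
      refine ⟨hvH, ?_⟩
      by_contra hall
      push_neg at hall
      have hcomp : ∀ x ∈ H, G.Adj v x := by
        intro x hx
        have hne : v ≠ x := fun he => hvH (he ▸ hx)
        have hvx := hall x hx
        rw [compl_adj] at hvx
        push_neg at hvx
        exact hvx hne
      have hsub : H ⊆ Cset G (insert v T) := by
        intro x hx
        refine ⟨?_, ?_⟩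
        · rintro (rfl | hxT)
          · exact hvH hx
          · exact (hHsub hx).1 hxT
        · rintro t (rfl | ht)
          · exact (hcomp x hx).symm
          · exact (hHsub hx).2 t ht
      obtain ⟨x, hx, y, hy, hxy⟩ := hHedge
      have hclique := clique_of_maximal hT' hvT hvC
      exact ((compl_adj ..).mp hxy).2
        (hclique (hsub hx) (hsub hy) ((compl_adj ..).mp hxy).1)
  have hcoh : IsCohandleOf Gᶜ T H := by
    refine ⟨?_, ?_, ?_⟩
    · rw [hNH, compl_compl]
      obtain ⟨t₀, ht₀⟩ := hTne
      refine ⟨(Gᶜ.induce (T ∪ Cset G T)).connectedComponentMk ⟨t₀, Or.inl ht₀⟩, ?_⟩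
      ext u
      constructor
      · rintro ⟨u', hu', rfl⟩
        rw [ConnectedComponent.mem_supp_iff] at hu'
        obtain ⟨p⟩ := ConnectedComponent.exact hu'
        exact walk_stays_T G T _ _ p.reverse ht₀
      · intro hu
        refine ⟨⟨u, Or.inl hu⟩, ?_, rfl⟩
        rw [ConnectedComponent.mem_supp_iff, ConnectedComponent.eq]
        exact (hTconn.preconnected ⟨u, hu⟩ ⟨t₀, ht₀⟩).map
          (Gᶜ.induceHomOfLE Set.subset_union_left).toHom
    · obtain ⟨x, hx⟩ := hHne
      exact fun he => (hHsub hx).1 (he ▸ hx)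
    · rw [nset_compl_T, hNH]
  refine ⟨⟨hcard, hHconn, ⟨T, hcoh⟩, ?_⟩, hcoh⟩
  intro v hv x y hx hy hxy
  by_contra hcon
  push_neg at hcon
  obtain ⟨hvx, hvy⟩ := hcon
  have hvH : v ∉ H := hv.1
  have hv' : v ∉ T ∪ Cset G T := by
    have := hNH ▸ hv
    exact this
  have hvT : v ∉ T := fun h => hv' (Or.inl h)
  have hvC : v ∉ Cset G T := fun h => hv' (Or.inr h)
  have hax : G.Adj v x := by
    rw [compl_adj] at hvx; push_neg at hvx
    exact hvx fun he => hvH (he ▸ hx)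
  have hay : G.Adj v y := by
    rw [compl_adj] at hvy; push_neg at hvy
    exact hvy fun he => hvH (he ▸ hy)
  have hclique := clique_of_maximal hT' hvT hvC
  have hxC : x ∈ Cset G (insert v T) := by
    refine ⟨?_, ?_⟩
    · rintro (rfl | hxT)
      · exact hvH hx
      · exact (hHsub hx).1 hxT
    · rintro t (rfl | ht)
      · exact hax.symm
      · exact (hHsub hx).2 t ht
  have hyC : y ∈ Cset G (insert v T) := by
    refine ⟨?_, ?_⟩
    · rintro (rfl | hyT)
      · exact hvH hy
      · exact (hHsub hy).1 hyT
    · rintro t (rfl | ht)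
      · exact hay.symm
      · exact (hHsub hy).2 t ht
  exact ((compl_adj ..).mp hxy).2 (hclique hxC hyC ((compl_adj ..).mp hxy).1)
end

section
/- Let G be a finite simple graph, let H be a generalized handle of G with generalized co-handle J, and assume moreover that H = V(G)∖(J∪N(J)). Then J is a maximal interesting set of the complement graph of G. -/
open SimpleGraph

lemma aux_walk_supp {V : Type} (G : SimpleGraph V) (S : Set V)
    (c : (G.induce S).ConnectedComponent) :
    ∀ {u v : ↥S} (_ : (G.induce S).Walk u v) (hu : u ∈ c.supp),
      ∃ hv : v ∈ c.supp,
        (G.induce (Subtype.val '' c.supp)).Reachable ⟨u.1, ⟨u, hu, rfl⟩⟩ ⟨v.1, ⟨v, hv, rfl⟩⟩ := by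
  intro u v p
  induction p with
  | nil => intro hu; exact ⟨hu, Reachable.refl _⟩
  | @cons a b w h p ih =>
    intro hu
    have hb : b ∈ c.supp := by
      rw [SimpleGraph.ConnectedComponent.mem_supp_iff] at hu ⊢
      rw [← hu]
      exact SimpleGraph.ConnectedComponent.sound h.symm.reachable
    obtain ⟨hv, hr⟩ := ih hb
    have hadj : (G.induce (Subtype.val '' c.supp)).Adj ⟨a.1, ⟨a, hu, rfl⟩⟩ ⟨b.1, ⟨b, hb, rfl⟩⟩ := by
      simpa using h
    exact ⟨hv, hadj.reachable.trans hr⟩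

lemma aux_supp_connected {V : Type} (G : SimpleGraph V) (S : Set V)
    (c : (G.induce S).ConnectedComponent) :
    (G.induce (Subtype.val '' c.supp)).Connected := by
  obtain ⟨v0, hv0⟩ := c.exists_rep
  have hv0m : v0 ∈ c.supp := by rw [SimpleGraph.ConnectedComponent.mem_supp_iff]; exact hv0
  rw [connected_iff]
  constructor
  · rintro ⟨a, a0, ha0, rfl⟩ ⟨b, b0, hb0, rfl⟩
    rw [SimpleGraph.ConnectedComponent.mem_supp_iff] at ha0 hb0
    have hre : (G.induce S).Reachable a0 b0 :=
      SimpleGraph.ConnectedComponent.exact (ha0.trans hb0.symm)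
    obtain ⟨p⟩ := hre
    have ha0' : a0 ∈ c.supp := by rw [SimpleGraph.ConnectedComponent.mem_supp_iff]; exact ha0
    obtain ⟨hv, hr⟩ := aux_walk_supp G S c p ha0'
    exact hr
  · exact ⟨⟨v0.1, ⟨v0, hv0m, rfl⟩⟩⟩

lemma aux_walk_exit {V : Type} (G : SimpleGraph V) (T' J : Set V) :
    ∀ {u v : ↥T'} (_ : (G.induce T').Walk u v), u.1 ∈ J → v.1 ∉ J →
      ∃ n, n ∈ T' ∧ n ∈ Nset G J := by
  intro u v p
  induction p with
  | nil => intro hu hv; exact absurd hu hv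
  | @cons a b w h p ih =>
    intro hu hv
    by_cases hb : b.1 ∈ J
    · exact ih hb hv
    · refine ⟨b.1, b.2, hb, a.1, hu, ?_⟩
      have : G.Adj a.1 b.1 := by simpa using h
      exact this.symm

/-- If `H` is a generalized handle of `G` with generalized co-handle `J` and moreover
`H = V ∖ (J ∪ N(J))`, then `J` is a maximal interesting set of the complement of `G`. -/
theorem genhandle_cohandle_maximal_interesting
    {V : Type} [Fintype V] (G : SimpleGraph V) (H J : Set V)
    (hH : IsGenHandle G H) (hJ : IsCohandleOf G J H)
    (heq : H = (J ∪ Nset G J)ᶜ) :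
    IsMaximalInteresting Gᶜ J := by
  obtain ⟨⟨x, hx, y, hy, hxy⟩, -, hsee⟩ := hH
  obtain ⟨⟨c, hc⟩, hne, hNJ⟩ := hJ
  -- J is nonempty
  have hJne : J.Nonempty := by
    obtain ⟨v0, hv0⟩ := c.exists_rep
    refine ⟨v0.1, ?_⟩
    rw [← hc]
    exact ⟨v0, by rw [SimpleGraph.ConnectedComponent.mem_supp_iff]; exact hv0, rfl⟩
  -- vertices not in J and not in N(J) are in H
  have hmemH : ∀ v, v ∉ J → v ∉ Nset G J → v ∈ H := by
    intro v h1 h2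
    rw [heq]
    intro hmem
    rcases hmem with hmem | hmem
    · exact h1 hmem
    · exact h2 hmem
  -- Cset Gᶜ J = H
  have hCJ : Cset Gᶜ J = H := by
    ext v
    constructor
    · rintro ⟨hvJ, hall⟩
      refine hmemH v hvJ ?_
      rintro ⟨-, t, htJ, hadj⟩
      exact (hall t htJ).2 hadj
    · intro hvH
      have hvH' : v ∈ (J ∪ Nset G J)ᶜ := heq ▸ hvH
      have hvJ : v ∉ J := fun h => hvH' (Or.inl h)
      have hvN : v ∉ Nset G J := fun h => hvH' (Or.inr h)
      refine ⟨hvJ, fun t htJ => ?_⟩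
      rw [compl_adj]
      constructor
      · rintro rfl; exact hvJ htJ
      · intro hadj; exact hvN ⟨hvJ, t, htJ, hadj⟩
  -- J is interesting
  have hint : IsInteresting Gᶜ J := by
    refine ⟨hJne, ?_, ?_⟩
    · rw [compl_compl]
      rw [← hc]
      exact aux_supp_connected G _ c
    · rw [hCJ]
      intro hcl
      have := hcl hx hy hxy.ne
      rw [compl_adj] at this
      exact this.2 hxy
  refine ⟨hint, ?_⟩
  rintro T' ⟨hT'ne, hT'conn, hT'nc⟩ hsub
  rw [compl_compl] at hT'conn
  -- Step 1: T' contains no vertex of N(J)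
  have hstep1 : ∀ n, n ∈ T' → n ∉ Nset G J := by
    intro n hnT hnN
    -- Cset Gᶜ T' is not a clique of Gᶜ: get a G-edge inside
    rw [SimpleGraph.isClique_iff, Set.Pairwise] at hT'nc
    push_neg at hT'nc
    obtain ⟨a, ha, b, hb, hab, hnadj⟩ := hT'nc
    have hGab : G.Adj a b := by
      by_contra h
      exact hnadj ((compl_adj G a b).2 ⟨hab, h⟩)
    -- a, b ∈ H
    have hmem : ∀ z, z ∈ Cset Gᶜ T' → z ∈ H := by
      rintro z ⟨hzT, hall⟩
      refine hmemH z (fun h => hzT (hsub h)) ?_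
      rintro ⟨-, t, htJ, hadj⟩
      have := (hall t (hsub htJ))
      rw [compl_adj] at this
      exact this.2 hadj
    have haH := hmem a ha
    have hbH := hmem b hb
    have hnNH : n ∈ Nset G H := hNJ ▸ hnN
    rcases hsee n hnNH a b haH hbH hGab with hna | hnb
    · have := ha.2 n hnT
      rw [compl_adj] at this
      exact this.2 hna.symm
    · have := hb.2 n hnT
      rw [compl_adj] at this
      exact this.2 hnb.symm
  -- Step 2: T' contains no vertex of H
  have hstep2 : ∀ h, h ∈ T' → h ∉ H := by
    intro h hhT hhH
    obtain ⟨j, hjJ⟩ := hJne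
    have hjT : j ∈ T' := hsub hjJ
    obtain ⟨p⟩ := hT'conn ⟨j, hjT⟩ ⟨h, hhT⟩
    have hhJ : h ∉ J := by
      have : h ∈ (J ∪ Nset G J)ᶜ := heq ▸ hhH
      exact fun hm => this (Or.inl hm)
    obtain ⟨n, hnT, hnN⟩ := aux_walk_exit G T' J p hjJ hhJ
    exact hstep1 n hnT hnN
  -- hence T' ⊆ J
  apply Set.Subset.antisymm _ hsub
  intro v hvT
  by_contra hvJ
  by_cases hvN : v ∈ Nset G J
  · exact hstep1 v hvT hvN
  · exact hstep2 v hvT (hmemH v hvJ hvN)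
end
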